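/- There do not exist derivations D₁ and D₂ of the Lie algebra rh₃ = h₃ × ℝ such that D₁ and D₂ commute (D₁ ∘ D₂ = D₂ ∘ D₁), both are semisimple as endomorphisms of the underlying 4-dimensional real vector space, the characteristic polynomial of D₁ is X²(X − 1)², and the characteristic polynomial of D₂ is X²(X² + 1). -/

import Mathlib

set_option linter.unusedTactic false
set_option linter.unnecessarySeqFocus false
set_option linter.unreachableTactic false

open Polynomial

/-- The 3-dimensional Heisenberg Lie algebra `h₃`: the real vector space `Fin 3 → ℝ`
with basis `e₁, e₂, e₃` and only nonzero bracket `⁅e₁, e₂⁆ = e₃`. -/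
def H3 : Type := Fin 3 → ℝ

noncomputable instance : AddCommGroup H3 := Pi.addCommGroup
noncomputable instance : Module ℝ H3 := Pi.module _ _ _
instance : FiniteDimensional ℝ H3 := inferInstanceAs (FiniteDimensional ℝ (Fin 3 → ℝ))

lemma H3.add_apply (x y : H3) (i : Fin 3) : (x + y) i = x i + y i := rfl
lemma H3.smul_apply (r : ℝ) (x : H3) (i : Fin 3) : (r • x) i = r * x i := rfl

noncomputable instance : LieRing H3 :=
  { (inferInstance : AddCommGroup H3) with
    bracket := fun x y => ![0, 0, x 0 * y 1 - x 1 * y 0]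
    add_lie := by
      intro x y z
      show (![_,_,_] : Fin 3 → ℝ) = @HAdd.hAdd (Fin 3 → ℝ) (Fin 3 → ℝ) (Fin 3 → ℝ) _ ![_,_,_] ![_,_,_]
      funext i
      fin_cases i <;> simp [H3.add_apply] <;> ring
    lie_add := by
      intro x y z
      show (![_,_,_] : Fin 3 → ℝ) = @HAdd.hAdd (Fin 3 → ℝ) (Fin 3 → ℝ) (Fin 3 → ℝ) _ ![_,_,_] ![_,_,_]
      funext i
      fin_cases i <;> simp [H3.add_apply] <;> ring
    lie_self := by
      intro x
      show (![_,_,_] : Fin 3 → ℝ) = 0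
      funext i
      fin_cases i <;> simp <;> ring
    leibniz_lie := by
      intro x y z
      show (![_,_,_] : Fin 3 → ℝ) = @HAdd.hAdd (Fin 3 → ℝ) (Fin 3 → ℝ) (Fin 3 → ℝ) _ ![_,_,_] ![_,_,_]
      funext i
      fin_cases i <;> simp [H3.add_apply] <;> ring }

noncomputable instance : LieAlgebra ℝ H3 :=
  { lie_smul := by
      intro r x y
      show (![_,_,_] : Fin 3 → ℝ) = @HSMul.hSMul ℝ (Fin 3 → ℝ) (Fin 3 → ℝ) _ r ![_,_,_]
      funext i
      fin_cases i <;> simp [H3.smul_apply] <;> ring }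

/-- `rh₃ := h₃ × ℝ`, the product Lie algebra of the Heisenberg Lie algebra `h₃` with the
1-dimensional abelian Lie algebra `ℝ`. -/
def RH3 : Type := H3 × ℝ

noncomputable instance : AddCommGroup RH3 := inferInstanceAs (AddCommGroup (H3 × ℝ))
noncomputable instance : Module ℝ RH3 := inferInstanceAs (Module ℝ (H3 × ℝ))
instance : FiniteDimensional ℝ RH3 := inferInstanceAs (FiniteDimensional ℝ (H3 × ℝ))

noncomputable instance : LieRing RH3 :=
  { (inferInstance : AddCommGroup RH3) with
    bracket := fun x y => (⁅x.1, y.1⁆, 0)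
    add_lie := by
      intro x y z
      show (⁅x.1 + y.1, z.1⁆, (0:ℝ)) = (⁅x.1, z.1⁆ + ⁅y.1, z.1⁆, 0 + 0)
      simp [add_lie]
    lie_add := by
      intro x y z
      show (⁅x.1, y.1 + z.1⁆, (0:ℝ)) = (⁅x.1, y.1⁆ + ⁅x.1, z.1⁆, 0 + 0)
      simp [lie_add]
    lie_self := by
      intro x
      show (⁅x.1, x.1⁆, (0:ℝ)) = (0, 0)
      simp
    leibniz_lie := by
      intro x y z
      show (⁅x.1, ⁅y.1, z.1⁆⁆, (0:ℝ)) = (⁅⁅x.1, y.1⁆, z.1⁆ + ⁅y.1, ⁅x.1, z.1⁆⁆, 0 + 0)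
      rw [← leibniz_lie]
      simp }

noncomputable instance : LieAlgebra ℝ RH3 :=
  { lie_smul := by
      intro r x y
      show (⁅x.1, r • y.1⁆, (0:ℝ)) = (r • ⁅x.1, y.1⁆, r • (0:ℝ))
      simp }

/-!
A derivation `D` of `rh₃` preserves the centre `z = ⟨e₃, e₄⟩` and sends `e₃ = ⁅e₁, e₂⁆` to
`(tr A) e₃`, where `A` is the matrix of the map induced by `D` on `rh₃ / z ≅ ℝ²`. Hence
`χ_D = χ_A · (X - tr A) · (X - u)` for some `u`. For `D₂` this forces `χ_A = X² + 1`, so `A₂² = -1`.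
The semisimple `D₁` has eigenvalues `0` and `1`, so `D₁² = D₁` and `A₁² = A₁`. An idempotent
commuting with a complex structure on `ℝ²` is `0` or `1`, and neither is compatible with
`χ_{D₁} = X² (X - 1)²`.
-/

open Matrix

theorem Module.End.IsSemisimple.aeval_eq_zero_of_charpoly_dvd_pow {K V : Type*} [Field K]
    [AddCommGroup V] [Module K V] [FiniteDimensional K V] {f : Module.End K V}
    (hf : f.IsSemisimple) {p : K[X]} {n : ℕ} (hn : n ≠ 0) (h : f.charpoly ∣ p ^ n) :
    aeval f p = 0 := by
  obtain ⟨q, rfl⟩ := (hf.minpoly_squarefree.dvd_pow_iff_dvd hn).1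
    ((LinearMap.minpoly_dvd_charpoly f).trans h)
  rw [map_mul, minpoly.aeval, zero_mul]

lemma LieDerivation.apply_mem_center {R L : Type*} [CommRing R] [LieRing L] [LieAlgebra R L]
    (D : LieDerivation R L L) {z : L} (hz : z ∈ LieAlgebra.center R L) :
    D z ∈ LieAlgebra.center R L := by
  rw [LieModule.mem_maxTrivSubmodule] at hz ⊢
  intro y
  have h := D.apply_lie_eq_sub y z
  rwa [hz, map_zero, ← lie_skew z (D y), hz, neg_zero, sub_zero, eq_comm] at h

lemma Matrix.toBlocks₁₁_mul {R l m : Type*} [Fintype l] [Fintype m] [NonUnitalNonAssocSemiring R]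
    (M N : Matrix (l ⊕ m) (l ⊕ m) R) :
    (M * N).toBlocks₁₁ = M.toBlocks₁₁ * N.toBlocks₁₁ + M.toBlocks₁₂ * N.toBlocks₂₁ := by
  ext i j
  simp [toBlocks₁₁, toBlocks₁₂, toBlocks₂₁, mul_apply, Fintype.sum_sum_type]

section TwoByTwo

variable {K : Type*} [Field K]

lemma Matrix.det_eq_one_of_mul_self_eq_neg_one [LinearOrder K] [IsStrictOrderedRing K]
    {M : Matrix (Fin 2) (Fin 2) K} (h : M * M = -1) : M.det = 1 := by
  have h₀₀ : M 0 0 * M 0 0 + M 0 1 * M 1 0 = -1 := by simpa [mul_apply] using congrFun₂ h 0 0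
  have h₀₁ : M 0 0 * M 0 1 + M 0 1 * M 1 1 = 0 := by simpa [mul_apply] using congrFun₂ h 0 1
  have hb : M 0 1 ≠ 0 := by
    intro hb
    rw [hb] at h₀₀
    nlinarith [sq_nonneg (M 0 0)]
  have htr : M 0 0 + M 1 1 = 0 := by
    refine (mul_eq_zero.1 ?_).resolve_left hb
    linear_combination h₀₁
  rw [det_fin_two]
  linear_combination (-1) * h₀₀ + M 0 0 * htr

lemma Matrix.eq_one_or_eq_neg_one_of_mul_self_eq_one [NeZero (2 : K)]
    {C : Matrix (Fin 2) (Fin 2) K} (h : C * C = 1) (hdet : C.det = 1) : C = 1 ∨ C = -1 := by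
  have h₀₀ : C 0 0 * C 0 0 + C 0 1 * C 1 0 = 1 := by simpa [mul_apply] using congrFun₂ h 0 0
  have h₀₁ : C 0 0 * C 0 1 + C 0 1 * C 1 1 = 0 := by simpa [mul_apply] using congrFun₂ h 0 1
  have h₁₀ : C 1 0 * C 0 0 + C 1 1 * C 1 0 = 0 := by simpa [mul_apply] using congrFun₂ h 1 0
  rw [det_fin_two] at hdet
  have htr : C 0 0 + C 1 1 ≠ 0 := by
    intro htr
    exact two_ne_zero (by linear_combination -h₀₀ - hdet + C 0 0 * htr : (2 : K) = 0)
  have hy : C 0 1 = 0 := (mul_eq_zero.1 (by linear_combination h₀₁)).resolve_right htr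
  have hz : C 1 0 = 0 := (mul_eq_zero.1 (by linear_combination h₁₀)).resolve_right htr
  rw [hy, hz] at h₀₀ hdet
  have hw : C 1 1 = C 0 0 := by linear_combination (-C 1 1) * h₀₀ + C 0 0 * hdet
  rcases mul_self_eq_one_iff.1 (by linear_combination h₀₀ : C 0 0 * C 0 0 = 1) with hx | hx <;>
    [left; right] <;> ext i j <;> fin_cases i <;> fin_cases j <;> simp [hy, hz, hw, hx]

/-- `(2A - 1) B` is again a square root of `-1`, so `det (2A - 1) = 1`, and an involution of
determinant `1` is `±1`. -/
lemma Matrix.eq_zero_or_eq_one_of_commute_of_mul_self_eq_neg_one [LinearOrder K]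
    [IsStrictOrderedRing K] {A B : Matrix (Fin 2) (Fin 2) K} (hA : A * A = A) (hB : B * B = -1)
    (hAB : Commute A B) : A = 0 ∨ A = 1 := by
  set C := (2 : K) • A - 1 with hC_def
  have hC : C * C = 1 := by
    simp only [hC_def, sub_mul, mul_sub, hA, smul_mul_assoc, mul_smul_comm, mul_one, one_mul]
    module
  have hCB : Commute C B := (hAB.smul_left _).sub_left (Commute.one_left B)
  have hdet : C.det = 1 := by
    have h : (C * B) * (C * B) = -1 := by
      rw [mul_assoc, ← mul_assoc B, ← hCB.eq, mul_assoc, ← mul_assoc, hC, hB, one_mul]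
    simpa [det_mul, det_eq_one_of_mul_self_eq_neg_one hB] using det_eq_one_of_mul_self_eq_neg_one h
  have hA_eq : A = (2 : K)⁻¹ • (C + 1) := by
    rw [hC_def, sub_add_cancel, smul_smul, inv_mul_cancel₀ two_ne_zero, one_smul]
  rcases eq_one_or_eq_neg_one_of_mul_self_eq_one hC hdet with h | h
  · right
    rw [hA_eq, h]
    module
  · left
    rw [hA_eq, h, neg_add_cancel, smul_zero]

end TwoByTwo

namespace RH3

/-- Coordinates `(x₁, x₂ | x₃, x₄)` with respect to `e₁, …, e₄`; the `inr` block spans the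
centre, so matrices of derivations are block lower triangular. -/
noncomputable def coords : RH3 ≃ₗ[ℝ] (Fin 2 ⊕ Fin 2 → ℝ) where
  toFun x := Sum.elim ![x.1 0, x.1 1] ![x.1 2, x.2]
  invFun v := (![v (.inl 0), v (.inl 1), v (.inr 0)], v (.inr 1))
  map_add' x y := by ext (i | i) <;> fin_cases i <;> rfl
  map_smul' r x := by ext (i | i) <;> fin_cases i <;> rfl
  left_inv x := Prod.ext (funext fun i => by fin_cases i <;> rfl) rfl
  right_inv v := by ext (i | i) <;> fin_cases i <;> rfl

noncomputable def basis : Module.Basis (Fin 2 ⊕ Fin 2) ℝ RH3 :=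
  .ofEquivFun coords

lemma basis_inl_zero : basis (.inl 0) = (![1, 0, 0], 0) := by
  rw [basis, Module.Basis.coe_ofEquivFun]; rfl

lemma basis_inl_one : basis (.inl 1) = (![0, 1, 0], 0) := by
  rw [basis, Module.Basis.coe_ofEquivFun]; rfl

lemma basis_inr_zero : basis (.inr 0) = (![0, 0, 1], 0) := by
  rw [basis, Module.Basis.coe_ofEquivFun]; rfl

lemma basis_inr_one : basis (.inr 1) = (![0, 0, 0], 1) := by
  rw [basis, Module.Basis.coe_ofEquivFun]; rfl

local notation "mat" => LinearMap.toMatrix basis basis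

lemma toMatrix_basis_apply (f : Module.End ℝ RH3) (i j : Fin 2 ⊕ Fin 2) :
    mat f i j = coords (f (basis j)) i := by
  rw [LinearMap.toMatrix_apply, basis, Module.Basis.ofEquivFun_repr_apply]

lemma lie_def (x y : RH3) : ⁅x, y⁆ = (![0, 0, x.1 0 * y.1 1 - x.1 1 * y.1 0], 0) := rfl

lemma lie_eq_zero_iff (x y : RH3) : ⁅x, y⁆ = 0 ↔ x.1 0 * y.1 1 - x.1 1 * y.1 0 = 0 := by
  rw [lie_def]
  constructor
  · exact congrArg (fun w : RH3 => w.1 2)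
  · intro h
    refine Prod.ext (funext fun i => ?_) rfl
    fin_cases i <;> simp [h] <;> rfl

lemma mem_center_iff (z : RH3) : z ∈ LieAlgebra.center ℝ RH3 ↔ z.1 0 = 0 ∧ z.1 1 = 0 := by
  simp only [LieModule.mem_maxTrivSubmodule, lie_eq_zero_iff]
  constructor
  · intro h
    exact ⟨by simpa using h (![0, 1, 0], 0), by simpa using h (![1, 0, 0], 0)⟩
  · rintro ⟨h₀, h₁⟩ y
    simp [h₀, h₁]

lemma basis_inr_mem_center : ∀ j : Fin 2, basis (.inr j) ∈ LieAlgebra.center ℝ RH3 := by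
  simp only [Fin.forall_fin_two, basis_inr_zero, basis_inr_one, mem_center_iff]
  simp

section Derivation

variable (D : LieDerivation ℝ RH3 RH3)

lemma toBlocks₁₂_toMatrix_derivation : (mat D).toBlocks₁₂ = 0 := by
  ext i j
  obtain ⟨h₀, h₁⟩ := (mem_center_iff _).1 (D.apply_mem_center (basis_inr_mem_center j))
  rw [toBlocks₁₂, of_apply, toMatrix_basis_apply]
  fin_cases i
  exacts [h₀, h₁]

lemma derivation_apply_basis_inr_zero :
    D (basis (.inr 0)) = (![0, 0, (D (basis (.inl 0))).1 0 + (D (basis (.inl 1))).1 1], 0) := by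
  have h : ⁅basis (.inl 0), basis (.inl 1)⁆ = basis (.inr 0) := by
    rw [lie_def, basis_inl_zero, basis_inl_one, basis_inr_zero]
    exact Prod.ext (funext fun i => by fin_cases i <;> simp) rfl
  rw [← h, D.apply_lie_eq_add, lie_def, lie_def, basis_inl_zero, basis_inl_one]
  refine Prod.ext (funext fun i => (H3.add_apply _ _ i).trans ?_) (add_zero (0 : ℝ))
  fin_cases i <;> simp [add_comm]

lemma toBlocks₂₂_toMatrix_derivation :
    (mat D).toBlocks₂₂ 0 0 = (mat D).toBlocks₁₁.trace ∧ (mat D).toBlocks₂₂ 1 0 = 0 := by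
  simp only [toBlocks₂₂, toBlocks₁₁, trace_fin_two, of_apply, toMatrix_basis_apply,
    LieDerivation.coeFn_coe, derivation_apply_basis_inr_zero]
  exact ⟨rfl, rfl⟩

theorem charpoly_derivation :
    ∃ u : ℝ, D.toLinearMap.charpoly =
      (mat D).toBlocks₁₁.charpoly * ((X - C (mat D).toBlocks₁₁.trace) * (X - C u)) := by
  obtain ⟨h₀₀, h₁₀⟩ := toBlocks₂₂_toMatrix_derivation D
  have hT : (mat D).toBlocks₂₂.IsUpperTriangular := by
    intro i j hij
    fin_cases i <;> fin_cases j <;> simp_all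
  refine ⟨(mat D).toBlocks₂₂ 1 1, ?_⟩
  rw [← LinearMap.charpoly_toMatrix _ basis]
  conv_lhs => rw [← fromBlocks_toBlocks (mat D)]
  rw [toBlocks₁₂_toMatrix_derivation, charpoly_fromBlocks_zero₁₂,
    charpoly_of_isUpperTriangular _ hT, Fin.prod_univ_two, h₀₀]

lemma toBlocks₁₁_toMatrix_comp (f : Module.End ℝ RH3) :
    (mat (D.toLinearMap ∘ₗ f)).toBlocks₁₁ = (mat D).toBlocks₁₁ * (mat f).toBlocks₁₁ := by
  rw [LinearMap.toMatrix_comp basis basis, toBlocks₁₁_mul,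
    toBlocks₁₂_toMatrix_derivation, zero_mul, add_zero]

lemma commute_toBlocks₁₁_toMatrix (D' : LieDerivation ℝ RH3 RH3)
    (h : D.toLinearMap ∘ₗ D'.toLinearMap = D'.toLinearMap ∘ₗ D.toLinearMap) :
    Commute (mat D).toBlocks₁₁ (mat D').toBlocks₁₁ := by
  rw [Commute, SemiconjBy, ← toBlocks₁₁_toMatrix_comp, ← toBlocks₁₁_toMatrix_comp, h]

lemma toBlocks₁₁_mul_self_eq_self_of_charpoly
    (hD : Module.End.IsSemisimple (D : Module.End ℝ RH3))
    (hχ : D.toLinearMap.charpoly = X ^ 2 * (X - 1) ^ 2) :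
    (mat D).toBlocks₁₁ * (mat D).toBlocks₁₁ = (mat D).toBlocks₁₁ := by
  have h := hD.aeval_eq_zero_of_charpoly_dvd_pow two_ne_zero (p := X * (X - 1))
    (by rw [hχ, mul_pow])
  have hD2 : D.toLinearMap ∘ₗ D.toLinearMap = D.toLinearMap := by
    simpa [mul_sub, sub_eq_zero, Module.End.mul_eq_comp] using h
  rw [← toBlocks₁₁_toMatrix_comp, hD2]

lemma toBlocks₁₁_ne_zero_and_ne_one_of_charpoly
    (hχ : D.toLinearMap.charpoly = X ^ 2 * (X - 1) ^ 2) :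
    (mat D).toBlocks₁₁ ≠ 0 ∧ (mat D).toBlocks₁₁ ≠ 1 := by
  obtain ⟨u, hu⟩ := charpoly_derivation D
  rw [hχ] at hu
  constructor
  · intro h
    rw [h, charpoly_zero, trace_zero, Fintype.card_fin, map_zero, sub_zero] at hu
    have h' : (X - 1) ^ 2 = X * (X - C u) := mul_left_cancel₀ (pow_ne_zero 2 X_ne_zero) hu
    simpa using congrArg (eval 0) h'
  · intro h
    rw [h, charpoly_one, trace_one] at hu
    have h₂ := congrArg (eval 2) hu
    norm_num at h₂

lemma toBlocks₁₁_mul_self_eq_neg_one_of_charpoly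
    (hχ : D.toLinearMap.charpoly = X ^ 2 * (X ^ 2 + 1)) :
    (mat D).toBlocks₁₁ * (mat D).toBlocks₁₁ = -1 := by
  obtain ⟨u, hu⟩ := charpoly_derivation D
  set A := (mat D).toBlocks₁₁
  rw [hχ] at hu
  have hroot (x : ℝ) (hx : eval x (A.charpoly * ((X - C A.trace) * (X - C u))) = 0) : x = 0 := by
    rw [← hu] at hx
    simpa using (by simpa using hx : x = 0 ∨ x ^ 2 + 1 = 0).resolve_right (by positivity)
  rw [hroot A.trace (by simp), hroot u (by simp), map_zero, sub_zero] at hu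
  have hχA : A.charpoly = X ^ 2 + 1 :=
    (mul_right_cancel₀ (pow_ne_zero 2 X_ne_zero) (by linear_combination hu)).symm
  simpa [hχA, sq, add_eq_zero_iff_eq_neg] using aeval_self_charpoly A

end Derivation

end RH3

/-- There do not exist commuting derivations `D₁`, `D₂` of `rh₃ = h₃ × ℝ`, both semisimple
as endomorphisms of the underlying 4-dimensional real vector space, with characteristic
polynomials `X² * (X - 1)²` and `X² * (X² + 1)` respectively. -/
theorem no_commuting_semisimple_derivations_rh3 :
    ¬ ∃ D₁ D₂ : LieDerivation ℝ RH3 RH3,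
        D₁.toLinearMap ∘ₗ D₂.toLinearMap = D₂.toLinearMap ∘ₗ D₁.toLinearMap ∧
        Module.End.IsSemisimple (D₁.toLinearMap : Module.End ℝ RH3) ∧
        Module.End.IsSemisimple (D₂.toLinearMap : Module.End ℝ RH3) ∧
        LinearMap.charpoly D₁.toLinearMap = X ^ 2 * (X - 1) ^ 2 ∧
        LinearMap.charpoly D₂.toLinearMap = X ^ 2 * (X ^ 2 + 1) := by
  rintro ⟨D₁, D₂, hcomm, hss₁, -, hχ₁, hχ₂⟩
  obtain ⟨hne₀, hne₁⟩ := RH3.toBlocks₁₁_ne_zero_and_ne_one_of_charpoly D₁ hχ₁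
  rcases eq_zero_or_eq_one_of_commute_of_mul_self_eq_neg_one
      (RH3.toBlocks₁₁_mul_self_eq_self_of_charpoly D₁ hss₁ hχ₁)
      (RH3.toBlocks₁₁_mul_self_eq_neg_one_of_charpoly D₂ hχ₂)
      (RH3.commute_toBlocks₁₁_toMatrix D₁ D₂ hcomm) with h | h
  exacts [hne₀ h, hne₁ h]
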